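/- Let d, n ≥ 1 and μ, L, R, ε > 0 with d/(εn) ≤ 1. Let (𝒳, Σ) be a measurable space, 𝒟 a probability measure on 𝒳, and f : ℝ^d × 𝒳 → ℝ a jointly measurable function such that for every x ∈ 𝒳, f(·,x) is μ-strongly convex on ℝ^d and L-Lipschitz on B(0,R), and for every w ∈ B(0,R), f(w,·) is 𝒟-integrable. Define the population loss F(w) = ∫_𝒳 f(w,x) d𝒟(x), and assume F has a minimizer w*(𝒟) over ℝ^d lying in B(0,R). For X = (x₁,…,xₙ) ∈ 𝒳ⁿ, let ŵ(X) ∈ B(0,R) denote the unique minimizer over ℝ^d of the empirical loss w ↦ (1/n)·Σᵢ f(w,xᵢ), and assume X ↦ ŵ(X) is measurable. Let Π_{B(0,R)} denote the Euclidean projection onto B(0,R), and let ν be the probability measure on ℝ^d whose density with respect to Lebesgue measure is proportional to exp(−(ε·μ·n/(2L))·‖t‖₂). Then ∫_{𝒳ⁿ} ∫_{ℝ^d} F(Π_{B(0,R)}(ŵ(X) + z)) dν(z) d𝒟ⁿ(X) − F(w*(𝒟)) ≤ (2L²/μ)·(1/n + d/(εn)), where 𝒟ⁿ is the n-fold product measure.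 -/

import Mathlib

open MeasureTheory

/-- Euclidean projection onto the closed ball `B(0,R)`:
`Π(u) = u` if `‖u‖ ≤ R`, and `Π(u) = (R/‖u‖)·u` otherwise. -/
noncomputable def projBall {d : ℕ} (R : ℝ) (u : EuclideanSpace ℝ (Fin d)) :
    EuclideanSpace ℝ (Fin d) :=
  if ‖u‖ ≤ R then u else (R / ‖u‖) • u

section Aux

open Real Set

/-- Quadratic growth at a global minimizer of a strongly convex function. -/
lemma strong_min_growth {E : Type*} [NormedAddCommGroup E] [InnerProductSpace ℝ E]
    {μ : ℝ} (hμ : 0 < μ) {G : E → ℝ}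
    (hconv : ConvexOn ℝ Set.univ (fun w => G w - μ / 2 * ‖w‖ ^ 2))
    {w : E} (hmin : ∀ v, G w ≤ G v) (v : E) :
    G w + μ / 2 * ‖v - w‖ ^ 2 ≤ G v := by
  have key : ∀ t : ℝ, 0 < t → t ≤ 1 →
      μ / 2 * (1 - t) * ‖v - w‖ ^ 2 ≤ G v - G w := by
    intro t ht ht1
    have hcomb := hconv.2 (Set.mem_univ w) (Set.mem_univ v)
      (show (0:ℝ) ≤ 1 - t by linarith) ht.le (by ring)
    simp only [smul_eq_mul] at hcomb
    set m := (1 - t) • w + t • v with hm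
    have hnorm : ‖m‖ ^ 2 = (1 - t) * ‖w‖ ^ 2 + t * ‖v‖ ^ 2 - t * (1 - t) * ‖v - w‖ ^ 2 := by
      have h1 : m = w + t • (v - w) := by
        rw [hm]; module
      rw [h1]
      have hvw : ‖v - w‖ ^ 2 = ‖v‖ ^ 2 - 2 * inner ℝ v w + ‖w‖ ^ 2 := by
        rw [@norm_sub_sq_real]
      have hww : (inner ℝ w w : ℝ) = ‖w‖ ^ 2 := real_inner_self_eq_norm_sq w
      have hcomm : (inner ℝ w v : ℝ) = inner ℝ v w := real_inner_comm v w
      have hexp : ‖w + t • (v - w)‖ ^ 2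
          = ‖w‖ ^ 2 + 2 * (t * ((inner ℝ w v : ℝ) - inner ℝ w w)) + t ^ 2 * ‖v - w‖ ^ 2 := by
        rw [norm_add_sq_real, real_inner_smul_right, inner_sub_right, norm_smul]
        rw [Real.norm_eq_abs, mul_pow, sq_abs]
      rw [hexp, hvw, hww, hcomm]; ring
    have hGm := hmin m
    nlinarith [hcomb, hGm]
  have hlim : Filter.Tendsto (fun t : ℝ => μ / 2 * (1 - t) * ‖v - w‖ ^ 2)
      (nhdsWithin 0 (Set.Ioi 0)) (nhds (μ / 2 * ‖v - w‖ ^ 2)) := by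
    have hc : Continuous (fun t : ℝ => μ / 2 * (1 - t) * ‖v - w‖ ^ 2) := by fun_prop
    have := hc.tendsto 0
    simp only [sub_zero, mul_one] at this
    simpa using this.mono_left nhdsWithin_le_nhds
  have : μ / 2 * ‖v - w‖ ^ 2 ≤ G v - G w := by
    refine le_of_tendsto hlim ?_
    filter_upwards [Ioo_mem_nhdsGT_of_mem (Set.left_mem_Ico.2 one_pos)] with t ht
    exact key t ht.1 ht.2.le
  linarith

lemma convexOn_finset_sum {E : Type*} [AddCommGroup E] [Module ℝ E]
    {ι : Type*} (t : Finset ι) (g : ι → E → ℝ)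
    (h : ∀ i ∈ t, ConvexOn ℝ Set.univ (g i)) :
    ConvexOn ℝ Set.univ (fun v => ∑ i ∈ t, g i v) := by
  classical
  induction t using Finset.cons_induction with
  | empty => simpa using convexOn_const 0 convex_univ
  | cons i t hi ih =>
    simp only [Finset.sum_cons]
    exact (h i (Finset.mem_cons_self _ _)).add
      (ih fun j hj => h j (Finset.mem_cons.2 (Or.inr hj)))

/-- Deterministic replace-one stability of empirical risk minimizers. -/
lemma stability {d n : ℕ} {μ L R : ℝ} (hμ : 0 < μ) (hL : 0 < L) (hn : 0 < n)
    {𝒳 : Type*}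
    (f : EuclideanSpace ℝ (Fin d) → 𝒳 → ℝ)
    (hsconv : ∀ x : 𝒳, ConvexOn ℝ Set.univ (fun w => f w x - μ / 2 * ‖w‖ ^ 2))
    (hLip : ∀ x : 𝒳, ∀ w ∈ Metric.closedBall (0 : EuclideanSpace ℝ (Fin d)) R,
      ∀ w' ∈ Metric.closedBall (0 : EuclideanSpace ℝ (Fin d)) R,
      |f w x - f w' x| ≤ L * ‖w - w'‖)
    (X X' : Fin n → 𝒳) (i : Fin n) (hXX' : ∀ j, j ≠ i → X j = X' j)
    (w w' : EuclideanSpace ℝ (Fin d)) (hwB : ‖w‖ ≤ R) (hw'B : ‖w'‖ ≤ R)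
    (hwmin : ∀ v, ∑ j, f w (X j) ≤ ∑ j, f v (X j))
    (hw'min : ∀ v, ∑ j, f w' (X' j) ≤ ∑ j, f v (X' j)) :
    ‖w - w'‖ ≤ 2 * L / (μ * n) := by
  have hμn : (0:ℝ) < μ * n := by positivity
  set δ := ‖w - w'‖ with hδ
  have hδ0 : 0 ≤ δ := norm_nonneg _
  have hconvX : ConvexOn ℝ Set.univ
      (fun v => (∑ j, f v (X j)) - (n * μ) / 2 * ‖v‖ ^ 2) := by
    have he : (fun v : EuclideanSpace ℝ (Fin d) =>
        (∑ j, f v (X j)) - (n * μ) / 2 * ‖v‖ ^ 2)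
        = fun v => ∑ j : Fin n, (f v (X j) - μ / 2 * ‖v‖ ^ 2) := by
      funext v
      rw [Finset.sum_sub_distrib, Finset.sum_const, Finset.card_univ, Fintype.card_fin]
      ring_nf
    rw [he]
    exact convexOn_finset_sum _ _ (fun j _ => hsconv (X j))
  have hconvX' : ConvexOn ℝ Set.univ
      (fun v => (∑ j, f v (X' j)) - (n * μ) / 2 * ‖v‖ ^ 2) := by
    have he : (fun v : EuclideanSpace ℝ (Fin d) =>
        (∑ j, f v (X' j)) - (n * μ) / 2 * ‖v‖ ^ 2)
        = fun v => ∑ j : Fin n, (f v (X' j) - μ / 2 * ‖v‖ ^ 2) := by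
      funext v
      rw [Finset.sum_sub_distrib, Finset.sum_const, Finset.card_univ, Fintype.card_fin]
      ring_nf
    rw [he]
    exact convexOn_finset_sum _ _ (fun j _ => hsconv (X' j))
  have h1 := strong_min_growth (by positivity : (0:ℝ) < n * μ) hconvX hwmin w'
  have h2 := strong_min_growth (by positivity : (0:ℝ) < n * μ) hconvX' hw'min w
  have hdiff : ∀ v : EuclideanSpace ℝ (Fin d),
      (∑ j, f v (X j)) - (∑ j, f v (X' j)) = f v (X i) - f v (X' i) := by
    intro v
    rw [← Finset.sum_sub_distrib, Finset.sum_eq_single i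
      (fun j _ hj => by rw [hXX' j hj]; ring)
      (fun h => absurd (Finset.mem_univ i) h)]
  have hnd : ‖w' - w‖ = δ := by rw [hδ, norm_sub_rev]
  have hball : ∀ v : EuclideanSpace ℝ (Fin d), ‖v‖ ≤ R →
      v ∈ Metric.closedBall (0 : EuclideanSpace ℝ (Fin d)) R := by
    intro v hv; simpa [Metric.mem_closedBall, dist_eq_norm] using hv
  have hLip1 := hLip (X i) w' (hball _ hw'B) w (hball _ hwB)
  have hLip2 := hLip (X' i) w (hball _ hwB) w' (hball _ hw'B)
  have key : μ * n * δ ^ 2 ≤ 2 * L * δ := by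
    have e1 := hdiff w'
    have e2 := hdiff w
    have a1 : f w' (X i) - f w (X i) ≤ L * δ := by
      have h := (abs_le.1 hLip1).2
      rw [hnd] at h; linarith
    have a2 : f w (X' i) - f w' (X' i) ≤ L * δ := by
      have h := (abs_le.1 hLip2).2
      linarith
    rw [hnd] at h1
    nlinarith [h1, h2, e1, e2]
  rcases eq_or_lt_of_le hδ0 with h | h
  · rw [← h]; positivity
  · have hδpos : 0 < δ := h
    rw [le_div_iff₀ hμn]
    nlinarith [key, hδpos]

lemma projBall_norm_le {d : ℕ} {R : ℝ} (hR : 0 < R) (u : EuclideanSpace ℝ (Fin d)) :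
    ‖projBall R u‖ ≤ R := by
  unfold projBall
  split_ifs with h
  · exact h
  · push_neg at h
    have hu : 0 < ‖u‖ := lt_trans hR h
    rw [norm_smul, Real.norm_eq_abs, abs_of_pos (div_pos hR hu), div_mul_cancel₀ _ hu.ne']

lemma projBall_sub_le {d : ℕ} {R : ℝ} (hR : 0 < R) (u w : EuclideanSpace ℝ (Fin d))
    (hw : ‖w‖ ≤ R) : ‖projBall R u - w‖ ≤ ‖u - w‖ := by
  unfold projBall
  split_ifs with h
  · exact le_refl _
  · push_neg at h
    have hu : 0 < ‖u‖ := lt_trans hR h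
    set c : ℝ := R / ‖u‖ with hc
    have hc0 : 0 < c := div_pos hR hu
    have hc1 : c < 1 := (div_lt_one hu).2 h
    have hcs : c * ‖u‖ = R := div_mul_cancel₀ _ hu.ne'
    have hcauchy : (inner ℝ u w : ℝ) ≤ ‖u‖ * ‖w‖ := real_inner_le_norm u w
    have e1 : ‖c • u - w‖ ^ 2 = c ^ 2 * ‖u‖ ^ 2 - 2 * (c * inner ℝ u w) + ‖w‖ ^ 2 := by
      rw [@norm_sub_sq_real, norm_smul, real_inner_smul_left, Real.norm_eq_abs, mul_pow, sq_abs]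
    have e2 : ‖u - w‖ ^ 2 = ‖u‖ ^ 2 - 2 * inner ℝ u w + ‖w‖ ^ 2 := by
      rw [@norm_sub_sq_real]
    have hsq : ‖c • u - w‖ ^ 2 ≤ ‖u - w‖ ^ 2 := by
      rw [e1, e2]
      nlinarith [hw, hu, norm_nonneg w]
    exact (pow_le_pow_iff_left₀ (norm_nonneg _) (norm_nonneg _) two_ne_zero).1 hsq

lemma continuous_projBall {d : ℕ} {R : ℝ} (hR : 0 < R) :
    Continuous (projBall R (d := d)) := by
  have heq : ∀ u : EuclideanSpace ℝ (Fin d), projBall R u = (R / max R ‖u‖) • u := by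
    intro u
    unfold projBall
    split_ifs with h
    · rw [max_eq_left h, div_self hR.ne', one_smul]
    · push_neg at h
      rw [max_eq_right h.le]
  rw [show projBall R (d := d) = fun u : EuclideanSpace ℝ (Fin d) => (R / max R ‖u‖) • u
    from funext heq]
  exact (continuous_const.div (continuous_const.max continuous_norm)
    (fun u => (lt_of_lt_of_le hR (le_max_left _ _)).ne')).smul continuous_id

/-- The coordinate-swap / ghost-sample map preserves the product measure. -/
lemma mp_ghost_swap {𝒳 : Type*} [MeasurableSpace 𝒳] (𝒟 : Measure 𝒳) [IsProbabilityMeasure 𝒟]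
    (n : ℕ) (i : Fin n) :
    MeasurePreserving
      (fun p : (Fin n → 𝒳) × 𝒳 => (Function.update p.1 i p.2, p.1 i))
      ((Measure.pi fun _ : Fin n => 𝒟).prod 𝒟)
      ((Measure.pi fun _ : Fin n => 𝒟).prod 𝒟) := by
  set Q : Measure (Fin n → 𝒳) := Measure.pi fun _ : Fin n => 𝒟 with hQ
  set e := MeasurableEquiv.piFinSuccAbove (fun _ : Fin (n + 1) => 𝒳) (Fin.last n) with he
  set σ : Fin (n + 1) ≃ Fin (n + 1) := Equiv.swap (Fin.castSucc i) (Fin.last n) with hσ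
  set pc := MeasurableEquiv.piCongrLeft (fun _ : Fin (n + 1) => 𝒳) σ with hpc
  have h4 : MeasurePreserving e (Measure.pi fun _ : Fin (n + 1) => 𝒟) (𝒟.prod Q) :=
    measurePreserving_piFinSuccAbove (fun _ : Fin (n + 1) => 𝒟) (Fin.last n)
  have h3 : MeasurePreserving pc (Measure.pi fun _ : Fin (n + 1) => 𝒟)
      (Measure.pi fun _ : Fin (n + 1) => 𝒟) :=
    measurePreserving_piCongrLeft (fun _ : Fin (n + 1) => 𝒟) σ
  have h2 : MeasurePreserving e.symm (𝒟.prod Q) (Measure.pi fun _ : Fin (n + 1) => 𝒟) :=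
    h4.symm e
  have h1 : MeasurePreserving (Prod.swap : (Fin n → 𝒳) × 𝒳 → 𝒳 × (Fin n → 𝒳))
      (Q.prod 𝒟) (𝒟.prod Q) := Measure.measurePreserving_swap
  have h5 : MeasurePreserving (Prod.swap : 𝒳 × (Fin n → 𝒳) → (Fin n → 𝒳) × 𝒳)
      (𝒟.prod Q) (Q.prod 𝒟) := Measure.measurePreserving_swap
  have hcomp := ((((h5.comp h4).comp h3).comp h2).comp h1)
  convert hcomp using 1
  funext p
  obtain ⟨X, x'⟩ := p
  show (Function.update X i x', X i)
    = Prod.swap (e (pc (e.symm (Prod.swap (X, x')))))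
  have hY : e.symm (Prod.swap (X, x')) = (Fin.last n).insertNth x' X := rfl
  rw [hY]
  set Y := (Fin.last n).insertNth (α := fun _ => 𝒳) x' X with hYdef
  have hZ : ∀ j, pc Y j = Y (σ j) := by
    intro j
    conv_lhs => rw [show j = σ (σ j) from (Equiv.swap_apply_self _ _ j).symm]
    exact MeasurableEquiv.piCongrLeft_apply_apply (β := fun _ : Fin (n+1) => 𝒳) σ Y (σ j)
  have hYcast : ∀ j : Fin n, Y (Fin.castSucc j) = X j := by
    intro j
    rw [hYdef, show Fin.castSucc j = (Fin.last n).succAbove j by rw [Fin.succAbove_last]]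
    exact Fin.insertNth_apply_succAbove _ _ _ _
  have hYlast : Y (Fin.last n) = x' := Fin.insertNth_apply_same _ _ _
  have hfst : e (pc Y) = (pc Y (Fin.last n), fun j => pc Y ((Fin.last n).succAbove j)) := rfl
  rw [hfst]
  simp only [Prod.swap_prod_mk, Prod.mk.injEq]
  refine ⟨?_, ?_⟩
  · funext j
    rw [hZ, Fin.succAbove_last]
    by_cases hj : j = i
    · subst hj
      rw [Equiv.swap_apply_left, hYlast, Function.update_self]
    · rw [Equiv.swap_apply_of_ne_of_ne
        (fun h => hj (Fin.castSucc_injective _ h)) (Fin.castSucc_lt_last j).ne,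
        hYcast, Function.update_of_ne hj]
  · rw [hZ, Equiv.swap_apply_right, hYcast]

/-- Transfer of integrability and integrals along a measure-preserving self-map. -/
lemma mp_transfer {α : Type*} [MeasurableSpace α] {P : Measure α} {T : α → α}
    (hT : MeasurePreserving T P P) {k : α → ℝ} (hk : AEStronglyMeasurable k P) :
    (Integrable (fun p => k (T p)) P ↔ Integrable k P) ∧
    ∫ p, k (T p) ∂P = ∫ p, k p ∂P := by
  have h1 : AEStronglyMeasurable k (Measure.map T P) := by rw [hT.map_eq]; exact hk
  constructor
  · have := integrable_map_measure h1 hT.measurable.aemeasurable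
    rw [hT.map_eq] at this
    exact this.symm
  · have := integral_map hT.measurable.aemeasurable h1
    rw [hT.map_eq] at this
    exact this.symm

lemma integrable_comp_snd {α β : Type*} [MeasurableSpace α] [MeasurableSpace β]
    (μ : Measure α) (ν : Measure β) [IsProbabilityMeasure μ] [IsProbabilityMeasure ν]
    {g : β → ℝ} (hg : Integrable g ν) :
    Integrable (fun p : α × β => g p.2) (μ.prod ν) := by
  have hmap : Measure.map Prod.snd (μ.prod ν) = ν := by
    rw [Measure.map_snd_prod, measure_univ, one_smul]
  have h1 : AEStronglyMeasurable g (Measure.map Prod.snd (μ.prod ν)) := by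
    rw [hmap]; exact hg.aestronglyMeasurable
  have := (integrable_map_measure h1 measurable_snd.aemeasurable).1 (by rw [hmap]; exact hg)
  exact this

lemma abs_int_le {α : Type*} [MeasurableSpace α] (μ : Measure α) (f : α → ℝ) :
    |∫ a, f a ∂μ| ≤ ∫ a, |f a| ∂μ := by
  simpa [Real.norm_eq_abs] using norm_integral_le_integral_norm (μ := μ) f

lemma noise_facts {d : ℕ} (hd : 1 ≤ d) {β c : ℝ} (hβ : 0 < β) (hc : 0 < c)
    (ν : Measure (EuclideanSpace ℝ (Fin d)))
    (hν : ν = volume.withDensity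
      (fun t => ENNReal.ofReal (c * Real.exp (-β * ‖t‖))))
    (hprob : IsProbabilityMeasure ν) :
    Integrable (fun z : EuclideanSpace ℝ (Fin d) => ‖z‖) ν ∧
    ∫ z, ‖z‖ ∂ν = d / β := by
  set E := EuclideanSpace ℝ (Fin d)
  haveI : Nontrivial E := by
    have : 0 < Module.finrank ℝ E := by
      rw [finrank_euclideanSpace, Fintype.card_fin]; omega
    exact Module.nontrivial_of_finrank_pos (R := ℝ) this
  have hdim : Module.finrank ℝ E = d := by
    rw [finrank_euclideanSpace, Fintype.card_fin]
  set ρ : E → ℝ := fun t => c * Real.exp (-β * ‖t‖) with hρ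
  have hρpos : ∀ t, 0 < ρ t := fun t => mul_pos hc (Real.exp_pos _)
  have hρcont : Continuous ρ := by fun_prop
  set fnn : E → NNReal := fun t => Real.toNNReal (ρ t) with hfnn
  have hfnn_meas : Measurable fnn := hρcont.measurable.real_toNNReal
  have hν' : ν = volume.withDensity (fun t => (fnn t : ENNReal)) := by
    rw [hν]; rfl
  -- base integrability of ρ from hprob
  have hρint : Integrable ρ volume := by
    have h1 : ∫⁻ t, ENNReal.ofReal (ρ t) ∂(volume : Measure E) = 1 := by
      have := hprob.measure_univ
      rw [hν, withDensity_apply _ MeasurableSet.univ, setLIntegral_univ] at this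
      exact this
    refine ⟨hρcont.aestronglyMeasurable, ?_⟩
    show (∫⁻ t, (‖ρ t‖₊ : ENNReal) ∂(volume : Measure E)) < ⊤
    have heq : ∀ t : E, (‖ρ t‖₊ : ENNReal) = ENNReal.ofReal (ρ t) := fun t =>
      (Real.enorm_eq_ofReal (hρpos t).le)
    simp_rw [heq, h1]
    exact ENNReal.one_lt_top
  have hexpint : Integrable (fun t : E => Real.exp (-β * ‖t‖)) volume := by
    have := hρint.const_mul (1/c)
    simpa [hρ, mul_comm, ← mul_assoc, one_div, inv_mul_cancel₀ hc.ne', mul_inv_cancel₀ hc.ne'] using this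
  have hhalf : Integrable (fun t : E => Real.exp (-(β/2) * ‖t‖)) volume := by
    have heq : (fun t : E => Real.exp (-(β/2) * ‖t‖))
        = fun t : E => Real.exp (-β * ‖(2:ℝ)⁻¹ • t‖) := by
      funext t; rw [norm_smul]; norm_num; ring_nf
    rw [heq]
    exact (integrable_comp_smul_iff volume
      (fun t : E => Real.exp (-β * ‖t‖)) (by norm_num : ((2:ℝ)⁻¹ ≠ 0))).2 hexpint
  -- integrability of ρ * norm
  have hmulint : Integrable (fun t : E => ρ t * ‖t‖) volume := by
    refine Integrable.mono' (hhalf.const_mul (c * (2/β)))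
      (by fun_prop : Continuous fun t : E => ρ t * ‖t‖).aestronglyMeasurable ?_
    filter_upwards with t
    have hs : (0:ℝ) ≤ ‖t‖ := norm_nonneg _
    have hkey : ‖t‖ ≤ (2/β) * Real.exp ((β/2) * ‖t‖) := by
      have h1 : (β/2) * ‖t‖ ≤ Real.exp ((β/2) * ‖t‖) :=
        le_trans (by linarith [Real.add_one_le_exp ((β/2) * ‖t‖)]) (le_refl _)
      calc ‖t‖ = (2/β) * ((β/2) * ‖t‖) := by field_simp
      _ ≤ (2/β) * Real.exp ((β/2) * ‖t‖) := by
          apply mul_le_mul_of_nonneg_left h1 (by positivity)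
    rw [Real.norm_eq_abs, abs_of_nonneg (by positivity : (0:ℝ) ≤ ρ t * ‖t‖)]
    calc ρ t * ‖t‖ ≤ ρ t * ((2/β) * Real.exp ((β/2) * ‖t‖)) :=
          mul_le_mul_of_nonneg_left hkey (hρpos t).le
    _ = c * (2/β) * (Real.exp (-β * ‖t‖) * Real.exp ((β/2) * ‖t‖)) := by
        simp only [hρ]; ring
    _ = c * (2/β) * Real.exp (-(β/2) * ‖t‖) := by
        rw [← Real.exp_add]; congr 1; ring
  -- part (a)
  have hInt : Integrable (fun z : E => ‖z‖) ν := by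
    rw [hν', integrable_withDensity_iff_integrable_smul hfnn_meas]
    refine hmulint.congr ?_
    filter_upwards with t
    rw [NNReal.smul_def, smul_eq_mul, hfnn, Real.coe_toNNReal _ (hρpos t).le]
  refine ⟨hInt, ?_⟩
  -- value of the integral
  rw [hν', integral_withDensity_eq_integral_smul hfnn_meas]
  have hsm : (fun t : E => fnn t • ‖t‖) = fun t => ρ t * ‖t‖ := funext fun t => by
    rw [NNReal.smul_def, smul_eq_mul, hfnn, Real.coe_toNNReal _ (hρpos t).le]
  rw [hsm]
  have hone : ∫ t, ρ t ∂(volume : Measure E) = 1 := by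
    have h1 : ∫ z, (1:ℝ) ∂ν = 1 := by simp
    rw [hν', integral_withDensity_eq_integral_smul hfnn_meas] at h1
    have hsm1 : (fun t : E => fnn t • (1:ℝ)) = fun t => ρ t := funext fun t => by
      rw [NNReal.smul_def, smul_eq_mul, hfnn, Real.coe_toNNReal _ (hρpos t).le, mul_one]
    rwa [hsm1] at h1
  set κ := ((volume : Measure E) (Metric.ball 0 1)).toReal with hκ
  have hr0 : ∫ t, ρ t ∂(volume : Measure E)
      = d • κ • ∫ y in Set.Ioi (0:ℝ), y ^ (d-1) • (c * Real.exp (-β*y)) := by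
    have h := integral_fun_norm_addHaar (volume : Measure E)
      (fun y => c * Real.exp (-β * y))
    rw [hdim] at h
    exact h
  have hr1 : ∫ t, ρ t * ‖t‖ ∂(volume : Measure E)
      = d • κ • ∫ y in Set.Ioi (0:ℝ), y ^ (d-1) • (c * Real.exp (-β*y) * y) := by
    have h := integral_fun_norm_addHaar (volume : Measure E)
      (fun y => c * Real.exp (-β * y) * y)
    rw [hdim] at h
    exact h
  set P : ℝ := (1/β) ^ (d:ℝ) with hP
  have hdne : ((d:ℝ)) ≠ 0 := Nat.cast_ne_zero.2 (by omega)
  have hI0 : ∫ y in Set.Ioi (0:ℝ), y ^ (d-1) • (c * Real.exp (-β*y))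
      = c * (P * Real.Gamma d) := by
    have hcongr : ∀ y ∈ Set.Ioi (0:ℝ),
        y ^ (d-1) • (c * Real.exp (-β*y)) = c * (y ^ ((d:ℝ)-1) * Real.exp (-(β*y))) := by
      intro y hy
      rw [smul_eq_mul, show ((d:ℝ)-1) = ((d-1 : ℕ):ℝ) by
        rw [Nat.cast_sub hd, Nat.cast_one], Real.rpow_natCast]
      ring_nf
    rw [setIntegral_congr_fun measurableSet_Ioi hcongr, integral_const_mul,
      integral_rpow_mul_exp_neg_mul_Ioi (by positivity) hβ, hP]
  have hI1 : ∫ y in Set.Ioi (0:ℝ), y ^ (d-1) • (c * Real.exp (-β*y) * y)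
      = c * ((1/β) ^ ((d:ℝ)+1) * Real.Gamma ((d:ℝ)+1)) := by
    have hcongr : ∀ y ∈ Set.Ioi (0:ℝ),
        y ^ (d-1) • (c * Real.exp (-β*y) * y)
          = c * (y ^ (((d:ℝ)+1)-1) * Real.exp (-(β*y))) := by
      intro y hy
      have hy0 : (0:ℝ) < y := hy
      rw [smul_eq_mul, show (((d:ℝ)+1)-1) = ((d : ℕ):ℝ) by ring, Real.rpow_natCast,
        show (d : ℕ) = (d - 1) + 1 by omega, pow_succ]
      ring_nf
      rw [show 1 + (d - 1) - 1 = d - 1 by omega]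
    rw [setIntegral_congr_fun measurableSet_Ioi hcongr, integral_const_mul,
      integral_rpow_mul_exp_neg_mul_Ioi (by positivity) hβ]
  have hΓ : Real.Gamma ((d:ℝ)+1) = d * Real.Gamma d := Real.Gamma_add_one hdne
  have hpow : (1/β:ℝ) ^ ((d:ℝ)+1) = P * (1/β) := by
    rw [Real.rpow_add (by positivity : (0:ℝ) < 1/β), Real.rpow_one, hP]
  rw [hr1, hI1, hΓ, hpow]
  rw [hr0, hI0] at hone
  rw [nsmul_eq_mul, smul_eq_mul] at hone ⊢
  have hβne : β ≠ 0 := hβ.ne'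
  field_simp at hone ⊢
  nlinarith [hone]


end Aux

/-- For per-datum `μ`-strongly convex, `L`-Lipschitz-on-`B(0,R)` losses,
output perturbation on the empirical loss with noise density proportional to
`exp(−(εμn/(2L))‖t‖)` has expected excess population loss at most
`(2L²/μ)·(1/n + d/(εn))`, when `d/(εn) ≤ 1`. -/
theorem stmt_16 (d n : ℕ) (hd : 1 ≤ d) (hn : 1 ≤ n)
    (μ L R ε : ℝ) (hμ : 0 < μ) (hL : 0 < L) (hR : 0 < R) (hε : 0 < ε)
    (hde : (d : ℝ) / (ε * n) ≤ 1)
    {𝒳 : Type*} [MeasurableSpace 𝒳] (𝒟 : Measure 𝒳) [IsProbabilityMeasure 𝒟]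
    (f : EuclideanSpace ℝ (Fin d) → 𝒳 → ℝ)
    (hfmeas : Measurable (fun p : EuclideanSpace ℝ (Fin d) × 𝒳 => f p.1 p.2))
    (hsconv : ∀ x : 𝒳, ConvexOn ℝ Set.univ (fun w => f w x - μ / 2 * ‖w‖ ^ 2))
    (hLip : ∀ x : 𝒳, ∀ w ∈ Metric.closedBall (0 : EuclideanSpace ℝ (Fin d)) R,
      ∀ w' ∈ Metric.closedBall (0 : EuclideanSpace ℝ (Fin d)) R,
      |f w x - f w' x| ≤ L * ‖w - w'‖)
    (hfint : ∀ w ∈ Metric.closedBall (0 : EuclideanSpace ℝ (Fin d)) R,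
      Integrable (fun x => f w x) 𝒟)
    (F : EuclideanSpace ℝ (Fin d) → ℝ) (hFdef : ∀ w, F w = ∫ x, f w x ∂𝒟)
    (wstar : EuclideanSpace ℝ (Fin d))
    (hwsmin : ∀ w, F wstar ≤ F w) (hwsB : ‖wstar‖ ≤ R)
    (what : (Fin n → 𝒳) → EuclideanSpace ℝ (Fin d))
    (hwhatB : ∀ X : Fin n → 𝒳, ‖what X‖ ≤ R)
    (hwhatmin : ∀ X : Fin n → 𝒳, ∀ w : EuclideanSpace ℝ (Fin d),
      (1 / (n : ℝ)) * ∑ i, f (what X) (X i) ≤ (1 / (n : ℝ)) * ∑ i, f w (X i))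
    (hwhatmeas : Measurable what)
    (c : ℝ) (hc : 0 < c)
    (ν : Measure (EuclideanSpace ℝ (Fin d)))
    (hν : ν = volume.withDensity
      (fun t => ENNReal.ofReal (c * Real.exp (-(ε * μ * n / (2 * L)) * ‖t‖))))
    (hprob : IsProbabilityMeasure ν) :
    (∫ X, (∫ z, F (projBall R (what X + z)) ∂ν) ∂(Measure.pi fun _ : Fin n => 𝒟)) -
      F wstar ≤ 2 * L ^ 2 / μ * (1 / (n : ℝ) + (d : ℝ) / (ε * n)) := by
  classical
  haveI := hprob
  have hn' : (0:ℝ) < n := by exact_mod_cast hn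
  have hn0 : 0 < n := hn
  set β : ℝ := ε * μ * n / (2 * L) with hβdef
  have hβ : 0 < β := div_pos (mul_pos (mul_pos hε hμ) hn') (by linarith)
  obtain ⟨hIνint, hIνval⟩ := noise_facts hd hβ hc ν hν hprob
  have hball : ∀ v : EuclideanSpace ℝ (Fin d), ‖v‖ ≤ R →
      v ∈ Metric.closedBall (0 : EuclideanSpace ℝ (Fin d)) R :=
    fun v hv => mem_closedBall_zero_iff.2 hv
  have hwsB' := hball _ hwsB
  -- F is L-Lipschitz on the ball
  have hFLip : ∀ w w' : EuclideanSpace ℝ (Fin d), ‖w‖ ≤ R → ‖w'‖ ≤ R →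
      |F w - F w'| ≤ L * ‖w - w'‖ := by
    intro w w' hw hw'
    rw [hFdef, hFdef, ← integral_sub (hfint w (hball _ hw)) (hfint w' (hball _ hw'))]
    calc |∫ x, (f w x - f w' x) ∂𝒟| ≤ ∫ x, |f w x - f w' x| ∂𝒟 := abs_int_le _ _
    _ ≤ ∫ _x, L * ‖w - w'‖ ∂𝒟 :=
        integral_mono ((hfint w (hball _ hw)).sub (hfint w' (hball _ hw'))).abs
          (integrable_const _) (fun x => hLip x w (hball _ hw) w' (hball _ hw'))
    _ = L * ‖w - w'‖ := by simp
  set G : EuclideanSpace ℝ (Fin d) → ℝ := fun u => F (projBall R u) with hG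
  have hFcontOn : ContinuousOn F (Metric.closedBall 0 R) := by
    have hlip : LipschitzOnWith (Real.toNNReal L) F (Metric.closedBall 0 R) := by
      apply LipschitzOnWith.of_dist_le_mul
      intro x hx y hy
      rw [Real.dist_eq, dist_eq_norm]
      refine le_trans (hFLip x y (mem_closedBall_zero_iff.1 hx)
        (mem_closedBall_zero_iff.1 hy)) ?_
      have : (Real.toNNReal L : ℝ) = L := Real.coe_toNNReal L hL.le
      rw [this]
    exact hlip.continuousOn
  have hGcont : Continuous G :=
    hFcontOn.comp_continuous (continuous_projBall hR)
      (fun u => mem_closedBall_zero_iff.2 (projBall_norm_le hR u))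
  set M : ℝ := |F wstar| + L * (2 * R) with hM
  have hGabs : ∀ u, |G u| ≤ M := by
    intro u
    have h1 : |G u - F wstar| ≤ L * ‖projBall R u - wstar‖ :=
      hFLip _ _ (projBall_norm_le hR u) hwsB
    have h2 : ‖projBall R u - wstar‖ ≤ 2 * R :=
      le_trans (norm_sub_le _ _) (by linarith [projBall_norm_le hR u, hwsB])
    have h3 := abs_sub_abs_le_abs_sub (G u) (F wstar)
    have h4 : L * ‖projBall R u - wstar‖ ≤ L * (2 * R) :=
      mul_le_mul_of_nonneg_left h2 hL.le
    rw [hM]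
    linarith
  have hprojid : ∀ X, G (what X) = F (what X) := by
    intro X
    show F (projBall R (what X)) = F (what X)
    rw [projBall, if_pos (hwhatB X)]
  set Q : Measure (Fin n → 𝒳) := Measure.pi fun _ : Fin n => 𝒟 with hQdef
  haveI : IsProbabilityMeasure Q := by rw [hQdef]; infer_instance
  -- the perturbed loss and its integral
  have hφmeas : Measurable (fun p : (Fin n → 𝒳) × EuclideanSpace ℝ (Fin d) =>
      G (what p.1 + p.2)) :=
    hGcont.measurable.comp ((hwhatmeas.comp measurable_fst).add measurable_snd)
  have hinner_int : ∀ X, Integrable (fun z => G (what X + z)) ν := by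
    intro X
    refine Integrable.mono' (integrable_const M)
      ((hGcont.comp (continuous_const.add continuous_id)).aestronglyMeasurable) ?_
    filter_upwards with z
    rw [Real.norm_eq_abs]
    exact hGabs _
  set H : (Fin n → 𝒳) → ℝ := fun X => ∫ z, G (what X + z) ∂ν with hH
  have hHmeas : StronglyMeasurable H :=
    hφmeas.stronglyMeasurable.integral_prod_right'
  have hHabs : ∀ X, |H X| ≤ M := by
    intro X
    calc |H X| ≤ ∫ z, |G (what X + z)| ∂ν := abs_int_le _ _
    _ ≤ ∫ _z, M ∂ν := integral_mono (hinner_int X).abs (integrable_const _) (fun z => hGabs _)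
    _ = M := by simp
  have hHint : Integrable H Q :=
    Integrable.mono' (integrable_const M) hHmeas.aestronglyMeasurable
      (by filter_upwards with X; rw [Real.norm_eq_abs]; exact hHabs X)
  have hFwhat_int : Integrable (fun X => F (what X)) Q := by
    have : (fun X => F (what X)) = fun X => G (what X) := funext fun X => (hprojid X).symm
    rw [this]
    exact Integrable.mono' (integrable_const M)
      (hGcont.measurable.comp hwhatmeas).aestronglyMeasurable
      (by filter_upwards with X; rw [Real.norm_eq_abs]; exact hGabs _)
  have hHle : ∀ X, H X ≤ F (what X) + L * ((d:ℝ)/β) := by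
    intro X
    have hstep : ∀ z : EuclideanSpace ℝ (Fin d),
        G (what X + z) ≤ F (what X) + L * ‖z‖ := by
      intro z
      have hp := projBall_sub_le hR (what X + z) (what X) (hwhatB X)
      rw [add_sub_cancel_left] at hp
      have h1 := (abs_le.1 (hFLip (projBall R (what X + z)) (what X)
        (projBall_norm_le hR _) (hwhatB X))).2
      have hmul : L * ‖projBall R (what X + z) - what X‖ ≤ L * ‖z‖ :=
        mul_le_mul_of_nonneg_left hp hL.le
      show F (projBall R (what X + z)) ≤ F (what X) + L * ‖z‖
      linarith
    calc H X ≤ ∫ z, (F (what X) + L * ‖z‖) ∂ν :=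
        integral_mono (hinner_int X) ((integrable_const _).add (hIνint.const_mul L)) hstep
    _ = F (what X) + L * ((d:ℝ)/β) := by
        rw [integral_add (integrable_const _) (hIνint.const_mul L), integral_const,
          integral_const_mul, hIνval]
        simp
  -- stability part
  set P : Measure ((Fin n → 𝒳) × 𝒳) := Q.prod 𝒟 with hPdef
  haveI : IsProbabilityMeasure P := by rw [hPdef]; infer_instance
  set g : (Fin n → 𝒳) × 𝒳 → ℝ := fun p => f (what p.1) p.2 with hgdef
  have hgmeas : Measurable g :=
    hfmeas.comp ((hwhatmeas.comp measurable_fst).prodMk measurable_snd)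
  have hfabs : ∀ (w : EuclideanSpace ℝ (Fin d)), ‖w‖ ≤ R →
      ∀ x, |f w x| ≤ |f wstar x| + L * (2*R) := by
    intro w hw x
    have h1 := (abs_le.1 (hLip x w (hball _ hw) wstar hwsB')).2
    have h1' := (abs_le.1 (hLip x w (hball _ hw) wstar hwsB')).1
    have h2 : ‖w - wstar‖ ≤ 2*R := le_trans (norm_sub_le _ _) (by linarith)
    have h3 := abs_sub_abs_le_abs_sub (f w x) (f wstar x)
    have h4 : L * ‖w - wstar‖ ≤ L * (2*R) := mul_le_mul_of_nonneg_left h2 hL.le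
    have h5 := hLip x w (hball _ hw) wstar hwsB'
    linarith
  have hfwsP : Integrable (fun p : (Fin n → 𝒳) × 𝒳 => f wstar p.2) P := by
    rw [hPdef]
    exact integrable_comp_snd Q 𝒟 (hfint wstar hwsB')
  have hgint : Integrable g P := by
    refine Integrable.mono' (hfwsP.abs.add (integrable_const (L * (2*R))))
      hgmeas.aestronglyMeasurable ?_
    filter_upwards with p
    rw [Real.norm_eq_abs]
    exact hfabs _ (hwhatB _) _
  set T : Fin n → ((Fin n → 𝒳) × 𝒳 → (Fin n → 𝒳) × 𝒳) :=
    fun i p => (Function.update p.1 i p.2, p.1 i) with hT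
  have hTmp : ∀ i : Fin n, MeasurePreserving (T i) P P := by
    intro i
    rw [hPdef, hQdef]
    exact mp_ghost_swap 𝒟 n i
  -- unscaled empirical minimality
  have unscale : ∀ (Y : Fin n → 𝒳) (v : EuclideanSpace ℝ (Fin d)),
      ∑ j, f (what Y) (Y j) ≤ ∑ j, f v (Y j) := by
    intro Y v
    have h := hwhatmin Y v
    have hpos : (0:ℝ) < 1/n := by positivity
    exact le_of_mul_le_mul_left (by simpa [mul_comm] using h) hpos
  -- pointwise ghost stability
  have hstab_pt : ∀ (i : Fin n) (p : (Fin n → 𝒳) × 𝒳),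
      g (T i p) ≤ f (what p.1) (p.1 i) + L * (2*L/(μ*n)) := by
    rintro i ⟨X, x'⟩
    set X' := Function.update X i x' with hX'
    have hdi : ∀ j, j ≠ i → X' j = X j := fun j hj => Function.update_of_ne hj _ _
    have hs := stability hμ hL hn0 f hsconv hLip X' X i hdi (what X') (what X)
      (hwhatB _) (hwhatB _) (unscale X') (unscale X)
    have hL1 := (abs_le.1 (hLip (X i) (what X') (hball _ (hwhatB _))
      (what X) (hball _ (hwhatB _)))).2
    have hmul : L * ‖what X' - what X‖ ≤ L * (2 * L / (μ * n)) :=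
      mul_le_mul_of_nonneg_left hs hL.le
    show f (what X') (X i) ≤ f (what X) (X i) + L * (2*L/(μ*n))
    linarith
  -- integrability of the per-coordinate functions
  have hkws_int : ∀ i : Fin n, Integrable (fun p : (Fin n → 𝒳) × 𝒳 => f wstar (p.1 i)) P := by
    intro i
    have := ((mp_transfer (hTmp i) hfwsP.aestronglyMeasurable).1).2 hfwsP
    exact this
  have hkws_val : ∀ i : Fin n, ∫ p, f wstar (p.1 i) ∂P = F wstar := by
    intro i
    have h1 := (mp_transfer (hTmp i) hfwsP.aestronglyMeasurable).2
    have h2 : ∫ p, f wstar p.2 ∂P = F wstar := by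
      rw [hPdef, integral_fun_snd (fun x => f wstar x), ← hFdef]
      simp
    rw [← h2]
    exact h1
  have hhi_meas : ∀ i : Fin n, Measurable (fun p : (Fin n → 𝒳) × 𝒳 => f (what p.1) (p.1 i)) := by
    intro i
    exact hfmeas.comp ((hwhatmeas.comp measurable_fst).prodMk
      ((measurable_pi_apply i).comp measurable_fst))
  have hhi_int : ∀ i : Fin n, Integrable (fun p : (Fin n → 𝒳) × 𝒳 => f (what p.1) (p.1 i)) P := by
    intro i
    refine Integrable.mono' ((hkws_int i).abs.add (integrable_const (L * (2*R))))
      (hhi_meas i).aestronglyMeasurable ?_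
    filter_upwards with p
    rw [Real.norm_eq_abs]
    exact hfabs _ (hwhatB _) _
  have hgT_int : ∀ i : Fin n, Integrable (fun p => g (T i p)) P := by
    intro i
    exact ((mp_transfer (hTmp i) hgmeas.aestronglyMeasurable).1).2 hgint
  -- Fubini: population risk of ERM as an integral over the product
  have hFub : ∫ X, F (what X) ∂Q = ∫ p, g p ∂P := by
    rw [hPdef, MeasureTheory.integral_prod g hgint]
    refine integral_congr_ae (Filter.Eventually.of_forall fun X => ?_)
    show F (what X) = ∫ y, f (what X) y ∂𝒟
    rw [hFdef]
  -- per-index ghost inequality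
  have heach : ∀ i : Fin n, ∫ p, g p ∂P ≤ ∫ p, f (what p.1) (p.1 i) ∂P + L * (2*L/(μ*n)) := by
    intro i
    calc ∫ p, g p ∂P = ∫ p, g (T i p) ∂P :=
        ((mp_transfer (hTmp i) hgmeas.aestronglyMeasurable).2).symm
    _ ≤ ∫ p, (f (what p.1) (p.1 i) + L * (2*L/(μ*n))) ∂P :=
        integral_mono (hgT_int i) ((hhi_int i).add (integrable_const _))
          (fun p => hstab_pt i p)
    _ = ∫ p, f (what p.1) (p.1 i) ∂P + L * (2*L/(μ*n)) := by
        rw [integral_add (hhi_int i) (integrable_const _), integral_const]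
        simp
  -- average over i
  have havg : ∫ p, g p ∂P ≤
      (1/(n:ℝ)) * ∑ i, ∫ p, f (what p.1) (p.1 i) ∂P + L * (2*L/(μ*n)) := by
    have hsum := Finset.sum_le_sum (fun i (_ : i ∈ Finset.univ) => heach i)
    rw [Finset.sum_const, Finset.card_univ, Fintype.card_fin, Finset.sum_add_distrib,
      Finset.sum_const, Finset.card_univ, Fintype.card_fin] at hsum
    have h2 := mul_le_mul_of_nonneg_left hsum (show (0:ℝ) ≤ 1/n by positivity)
    have h3 : (1/(n:ℝ)) * ((n:ℕ) • ∫ p, g p ∂P) = ∫ p, g p ∂P := by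
      rw [nsmul_eq_mul]
      field_simp
    rw [mul_add, h3] at h2
    have h4 : (1/(n:ℝ)) * ((n:ℕ) • (L * (2*L/(μ*n)))) = L * (2*L/(μ*n)) := by
      rw [nsmul_eq_mul]
      field_simp
    rw [h4] at h2
    exact h2
  -- minimality of the ERM against wstar
  have hmin_int : (1/(n:ℝ)) * ∑ i, ∫ p, f (what p.1) (p.1 i) ∂P
      ≤ (1/(n:ℝ)) * ∑ i, ∫ p, f wstar (p.1 i) ∂P := by
    refine mul_le_mul_of_nonneg_left ?_ (by positivity)
    rw [← integral_finset_sum _ (fun i _ => hhi_int i),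
      ← integral_finset_sum _ (fun i _ => hkws_int i)]
    refine integral_mono (integrable_finset_sum _ (fun i _ => hhi_int i))
      (integrable_finset_sum _ (fun i _ => hkws_int i)) ?_
    intro p
    exact unscale p.1 wstar
  have hws_sum : (1/(n:ℝ)) * ∑ i, ∫ p, f wstar (p.1 i) ∂P = F wstar := by
    rw [Finset.sum_congr rfl (fun i _ => hkws_val i), Finset.sum_const, Finset.card_univ,
      Fintype.card_fin, nsmul_eq_mul]
    field_simp
  have hstab : ∫ X, F (what X) ∂Q ≤ F wstar + 2*L^2/(μ*n) := by
    have : L * (2*L/(μ*n)) = 2*L^2/(μ*n) := by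
      field_simp
    rw [hFub]
    calc ∫ p, g p ∂P ≤ (1/(n:ℝ)) * ∑ i, ∫ p, f (what p.1) (p.1 i) ∂P + L * (2*L/(μ*n)) := havg
    _ ≤ (1/(n:ℝ)) * ∑ i, ∫ p, f wstar (p.1 i) ∂P + L * (2*L/(μ*n)) := by linarith [hmin_int]
    _ = F wstar + 2*L^2/(μ*n) := by rw [hws_sum, this]
  -- final assembly
  have hgoal_eq : (∫ X, (∫ z, F (projBall R (what X + z)) ∂ν) ∂(Measure.pi fun _ : Fin n => 𝒟))
      = ∫ X, H X ∂Q := rfl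
  have hmain : ∫ X, H X ∂Q ≤ F wstar + 2*L^2/(μ*n) + L * ((d:ℝ)/β) := by
    calc ∫ X, H X ∂Q ≤ ∫ X, (F (what X) + L * ((d:ℝ)/β)) ∂Q :=
        integral_mono hHint (hFwhat_int.add (integrable_const _)) (fun X => hHle X)
    _ = ∫ X, F (what X) ∂Q + L * ((d:ℝ)/β) := by
        rw [integral_add hFwhat_int (integrable_const _), integral_const]
        simp
    _ ≤ F wstar + 2*L^2/(μ*n) + L * ((d:ℝ)/β) := by linarith [hstab]
  rw [hgoal_eq]
  have harith : 2*L^2/(μ*n) + L * ((d:ℝ)/β) = 2 * L ^ 2 / μ * (1 / (n : ℝ) + (d : ℝ) / (ε * n)) := by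
    rw [hβdef]
    field_simp
  linarith [hmain, harith.le, harith.ge]
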